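/- There exists an arrangement of four equal circles in a circumscribed square whose coverage ratio strictly exceeds π/4; hence the mutually tangent arrangement does not maximize coverage ratio. -/

import Mathlib

/-!
Put four disks of radius `r = L/4 + ε` into the corners of the square `[0, L]²`. Compared with the
tangent arrangement `r = L/4`, their total area grows by about `2πLε`, while adjacent disks overlap
only in lenses of width `4ε` and height `2√(Lε)`, of area `O(ε^(3/2))`; diagonally opposite disks
stay disjoint. Bounding each lens by a rectangle, the union already beats `π/4` for `L = 10000`,
`r = 2501`.
-/

open MeasureTheory Metric Real Set ENNReal Function

section

variable {α ι : Type*} [MeasurableSpace α] [Fintype ι] {μ : Measure α} {s : ι → Set α} {u : Set α}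

theorem sum_measureReal_le_measureReal_iUnion_add_card_mul
    (hs : ∀ i, MeasurableSet (s i)) (hsfin : ∀ i, μ (s i) ≠ ∞) (hu : MeasurableSet u)
    (hufin : μ u ≠ ∞) (h : Pairwise fun i j ↦ s i ∩ s j ⊆ u) :
    ∑ i, μ.real (s i) ≤ μ.real (⋃ i, s i) + Fintype.card ι * μ.real u := by
  have hdisj : Pairwise (Disjoint on fun i ↦ s i \ u) := fun i j hij ↦
    Set.disjoint_left.2 fun p hpi hpj ↦ hpi.2 (h hij ⟨hpi.1, hpj.1⟩)
  have hunion : μ (⋃ i, s i) ≠ ∞ :=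
    ((measure_iUnion_fintype_le μ s).trans_lt (ENNReal.sum_lt_top.2 fun i _ ↦ (hsfin i).lt_top)).ne
  calc ∑ i, μ.real (s i) = ∑ i, (μ.real (s i \ u) + μ.real (s i ∩ u)) := by
        congr! 1 with i
        rw [add_comm, measureReal_inter_add_sdiff₀ hu.nullMeasurableSet (hsfin i)]
    _ ≤ ∑ i, μ.real (s i \ u) + ∑ _i : ι, μ.real u := by
        rw [← Finset.sum_add_distrib]
        exact Finset.sum_le_sum fun i _ ↦
          add_le_add_right (measureReal_mono inter_subset_right hufin) _
    _ ≤ μ.real (⋃ i, s i) + Fintype.card ι * μ.real u := by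
        rw [← measureReal_iUnion_fintype hdisj (fun i ↦ (hs i).diff hu)
          (fun i ↦ measure_ne_top_of_subset sdiff_subset (hsfin i))]
        simp only [Finset.sum_const, Finset.card_univ, nsmul_eq_mul]
        exact add_le_add_left (measureReal_mono (iUnion_mono fun i ↦ sdiff_subset) hunion) _
end

theorem EuclideanSpace.closedBall_subset_cube {ι : Type*} [Fintype ι] {c : EuclideanSpace ℝ ι}
    {r L : ℝ} (hc : ∀ j, c j ∈ Icc r (L - r)) :
    closedBall c r ⊆ {p : EuclideanSpace ℝ ι | ∀ j, p j ∈ Icc 0 L} := by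
  intro p hp j
  obtain ⟨hlo, hhi⟩ := abs_le.1 ((PiLp.dist_apply_le p c j).trans hp)
  exact ⟨by linarith [(hc j).1], by linarith [(hc j).2]⟩

theorem EuclideanSpace.volume_preimage_ofLp {ι : Type*} [Fintype ι] {s : Set (ι → ℝ)}
    (hs : MeasurableSet s) :
    volume (WithLp.ofLp ⁻¹' s : Set (EuclideanSpace ℝ ι)) = volume s :=
  (PiLp.volume_preserving_ofLp ι).measure_preimage hs.nullMeasurableSet

theorem EuclideanSpace.measureReal_closedBall_fin_two (x : EuclideanSpace ℝ (Fin 2)) {r : ℝ}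
    (hr : 0 ≤ r) : volume.real (closedBall x r) = π * r ^ 2 := by
  simp [measureReal_def, toReal_ofReal hr, pi_nonneg, mul_comm]

theorem EuclideanSpace.dist_fin_two (x y : EuclideanSpace ℝ (Fin 2)) :
    dist x y = √((x 0 - y 0) ^ 2 + (x 1 - y 1) ^ 2) := by
  simp [EuclideanSpace.dist_eq, Fin.sum_univ_two, Real.dist_eq, sq_abs]

theorem EuclideanSpace.mem_closedBall_fin_two_iff {c p : EuclideanSpace ℝ (Fin 2)} {r : ℝ}
    (hr : 0 ≤ r) : p ∈ closedBall c r ↔ (p 0 - c 0) ^ 2 + (p 1 - c 1) ^ 2 ≤ r ^ 2 := by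
  rw [mem_closedBall, EuclideanSpace.dist_fin_two, sqrt_le_left hr]

theorem mem_Icc_of_mem_lens {a b y r h s t : ℝ} (hr : 0 ≤ r) (h0 : 0 ≤ h)
    (hh : r ^ 2 - ((b - a) / 2) ^ 2 ≤ h ^ 2) (ha : (s - a) ^ 2 + (t - y) ^ 2 ≤ r ^ 2)
    (hb : (s - b) ^ 2 + (t - y) ^ 2 ≤ r ^ 2) :
    s ∈ Icc (b - r) (a + r) ∧ t ∈ Icc (y - h) (y + h) := by
  obtain ⟨-, hsa⟩ := abs_le_of_sq_le_sq' (by nlinarith : (s - a) ^ 2 ≤ r ^ 2) hr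
  obtain ⟨hsb, -⟩ := abs_le_of_sq_le_sq' (by nlinarith : (s - b) ^ 2 ≤ r ^ 2) hr
  -- `(s - a)² + (s - b)² = ((b - a)² + (2s - a - b)²) / 2`
  obtain ⟨hty, hty'⟩ := abs_le_of_sq_le_sq'
    (by nlinarith [sq_nonneg (2 * s - a - b)] : (t - y) ^ 2 ≤ h ^ 2) h0
  exact ⟨⟨by linarith, by linarith⟩, ⟨by linarith, by linarith⟩⟩

def rect (x₀ x₁ y₀ y₁ : ℝ) : Set (EuclideanSpace ℝ (Fin 2)) :=
  {p | p 0 ∈ Icc x₀ x₁ ∧ p 1 ∈ Icc y₀ y₁}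

theorem rect_eq_preimage_ofLp_Icc (x₀ x₁ y₀ y₁ : ℝ) :
    rect x₀ x₁ y₀ y₁ = WithLp.ofLp ⁻¹' Icc ![x₀, y₀] ![x₁, y₁] := by
  ext p
  simp [rect, Pi.le_def, Fin.forall_fin_two, and_and_and_comm]

theorem measurableSet_rect (x₀ x₁ y₀ y₁ : ℝ) : MeasurableSet (rect x₀ x₁ y₀ y₁) := by
  rw [rect_eq_preimage_ofLp_Icc]
  exact measurableSet_Icc.preimage (PiLp.volume_preserving_ofLp _).measurable

theorem volume_rect_ne_top (x₀ x₁ y₀ y₁ : ℝ) : volume (rect x₀ x₁ y₀ y₁) ≠ ∞ := by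
  rw [rect_eq_preimage_ofLp_Icc, EuclideanSpace.volume_preimage_ofLp measurableSet_Icc]
  exact isCompact_Icc.measure_lt_top.ne

theorem measureReal_rect {x₀ x₁ y₀ y₁ : ℝ} (hx : x₀ ≤ x₁) (hy : y₀ ≤ y₁) :
    volume.real (rect x₀ x₁ y₀ y₁) = (x₁ - x₀) * (y₁ - y₀) := by
  rw [rect_eq_preimage_ofLp_Icc, measureReal_def,
    EuclideanSpace.volume_preimage_ofLp measurableSet_Icc,
    Real.volume_Icc_pi_toReal (by simp [Pi.le_def, Fin.forall_fin_two, hx, hy]), Fin.prod_univ_two]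
  simp

def cornerCenters (r L : ℝ) : Fin 4 → EuclideanSpace ℝ (Fin 2) :=
  ![!₂[r, r], !₂[L - r, r], !₂[r, L - r], !₂[L - r, L - r]]

def lensRects (r L h : ℝ) : Set (EuclideanSpace ℝ (Fin 2)) :=
  rect (L - r - r) (r + r) (r - h) (r + h) ∪ rect (L - r - r) (r + r) (L - r - h) (L - r + h) ∪
    rect (r - h) (r + h) (L - r - r) (r + r) ∪ rect (L - r - h) (L - r + h) (L - r - r) (r + r)

section corners

variable {r L h : ℝ}

theorem measureReal_lensRects_le (hL : L ≤ 4 * r) (h0 : 0 ≤ h) :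
    volume.real (lensRects r L h) ≤ 4 * ((4 * r - L) * (2 * h)) := by
  calc volume.real (lensRects r L h)
      ≤ volume.real (rect (L - r - r) (r + r) (r - h) (r + h)) +
          volume.real (rect (L - r - r) (r + r) (L - r - h) (L - r + h)) +
          volume.real (rect (r - h) (r + h) (L - r - r) (r + r)) +
          volume.real (rect (L - r - h) (L - r + h) (L - r - r) (r + r)) := by
        grw [lensRects, measureReal_union_le, measureReal_union_le, measureReal_union_le]
    _ = 4 * ((4 * r - L) * (2 * h)) := by
        rw [measureReal_rect, measureReal_rect, measureReal_rect, measureReal_rect] <;> linarith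

theorem closedBall_cornerCenters_inter_subset_lensRects (hr : 0 ≤ r) (h0 : 0 ≤ h)
    (hh : r ^ 2 - (L / 2 - r) ^ 2 ≤ h ^ 2) (hdiag : (2 * r) ^ 2 < 2 * (L - 2 * r) ^ 2) :
    Pairwise fun i j ↦ closedBall (cornerCenters r L i) r ∩ closedBall (cornerCenters r L j) r ⊆
      lensRects r L h := by
  have hh' : r ^ 2 - ((L - r - r) / 2) ^ 2 ≤ h ^ 2 := by linarith
  suffices hlt : ∀ i j, i < j → closedBall (cornerCenters r L i) r ∩
      closedBall (cornerCenters r L j) r ⊆ lensRects r L h by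
    intro i j hij
    rcases hij.lt_or_gt with hij | hji
    · exact hlt i j hij
    · rw [inter_comm]
      exact hlt j i hji
  intro i j hij p ⟨hpi, hpj⟩
  rw [EuclideanSpace.mem_closedBall_fin_two_iff hr] at hpi hpj
  fin_cases i <;> fin_cases j <;>
    simp only [cornerCenters, Fin.isValue, Fin.mk_one, Fin.zero_eta, Fin.reduceFinMk, Fin.reduceLT,
      Fin.lt_one_iff, Fin.reduceEq, lt_self_iff_false, Matrix.cons_val,
      Matrix.cons_val_zero, Matrix.cons_val_one, Matrix.cons_val_fin_one] at hij hpi hpj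
  · exact Or.inl (Or.inl (Or.inl (mem_Icc_of_mem_lens hr h0 hh' hpi hpj)))
  · exact Or.inl (Or.inr (mem_Icc_of_mem_lens hr h0 hh' (by linarith) (by linarith)).symm)
  · -- diagonally opposite disks are disjoint by `hdiag`
    nlinarith [sq_nonneg (2 * p 0 - L), sq_nonneg (2 * p 1 - L)]
  · nlinarith [sq_nonneg (2 * p 0 - L), sq_nonneg (2 * p 1 - L)]
  · exact Or.inr (mem_Icc_of_mem_lens hr h0 hh' (by linarith) (by linarith)).symm
  · exact Or.inl (Or.inl (Or.inr (mem_Icc_of_mem_lens hr h0 hh' hpi hpj)))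

theorem le_measureReal_iUnion_closedBall_cornerCenters (hr : 0 ≤ r) (hL : L ≤ 4 * r)
    (h0 : 0 ≤ h) (hh : r ^ 2 - (L / 2 - r) ^ 2 ≤ h ^ 2)
    (hdiag : (2 * r) ^ 2 < 2 * (L - 2 * r) ^ 2) :
    4 * (π * r ^ 2) - 16 * ((4 * r - L) * (2 * h)) ≤
      volume.real (⋃ i, closedBall (cornerCenters r L i) r) := by
  have hmeas : MeasurableSet (lensRects r L h) :=
    (((measurableSet_rect _ _ _ _).union (measurableSet_rect _ _ _ _)).union
      (measurableSet_rect _ _ _ _)).union (measurableSet_rect _ _ _ _)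
  have hfin : volume (lensRects r L h) ≠ ∞ := by
    simp only [lensRects, ne_eq, measure_union_eq_top_iff, volume_rect_ne_top, or_self,
      not_false_eq_true]
  have key := sum_measureReal_le_measureReal_iUnion_add_card_mul
    (fun _ ↦ measurableSet_closedBall) (fun _ ↦ measure_closedBall_lt_top.ne) hmeas hfin
    (closedBall_cornerCenters_inter_subset_lensRects hr h0 hh hdiag)
  simp only [EuclideanSpace.measureReal_closedBall_fin_two _ hr, Finset.sum_const,
    Finset.card_univ, Fintype.card_fin, nsmul_eq_mul, Nat.cast_ofNat] at key
  linarith [measureReal_lensRects_le hL h0]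

end corners

/-- There exists an arrangement of four equal circles inside a square whose
coverage ratio strictly exceeds `π/4`; hence the mutually tangent arrangement
does not maximize the coverage ratio. -/
theorem exists_better_than_tangent_arrangement :
    ∃ (r L : ℝ) (c : Fin 4 → EuclideanSpace ℝ (Fin 2)), 0 < r ∧ 0 < L ∧
      (∀ i, closedBall (c i) r ⊆ {p : EuclideanSpace ℝ (Fin 2) |
        ∀ j, p j ∈ Set.Icc (0 : ℝ) L}) ∧
      (volume (⋃ i, closedBall (c i) r)).toReal / L ^ 2 > π / 4 := by
  refine ⟨2501, 10000, cornerCenters 2501 10000, by norm_num, by norm_num,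
    fun i ↦ EuclideanSpace.closedBall_subset_cube fun j ↦ ?_, ?_⟩
  · fin_cases i <;> fin_cases j <;> norm_num [cornerCenters]
  · have hvol := le_measureReal_iUnion_closedBall_cornerCenters (r := 2501) (L := 10000) (h := 100)
      (by norm_num) (by norm_num) (by norm_num) (by norm_num) (by norm_num)
    rw [← measureReal_def, gt_iff_lt, lt_div_iff₀ (by norm_num)]
    nlinarith [pi_gt_three]
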